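/- Signed distance of the 2-D cone, base region: fix h > 0 and ψ ∈ (0, π/2), set p* = h/(1 + sin ψ), and define l̲₁(x) = tan(π/4 + ψ/2)·x − h/cos ψ for p* ≤ x ≤ h and l̲₁(x) = h·tan ψ for x ≥ h. Let D₃ = {(x, y) ∈ ℝ² : x ≥ p* and −l̲₁(x) < y < l̲₁(x)}. Then for every q = (x, y) ∈ D₃, the distance from q to the frontier ∂F satisfies infDist(q, ∂F) = |x − h|; moreover x − h ≤ 0 if and only if q ∈ F, so the signed distance of q to F equals (a₃·q + b₃)/‖a₃‖ with a₃ = (1, 0), b₃ = −h. -/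

import Mathlib

/-!
The frontier of `F` lies on the base line `x = h` and on the two slant lines `|y| = tan ψ · x`,
and the point `(h, y)` of the base is on it. When `x ≤ h`, multiplying `|y| < l̲₁(x)` by `cos ψ`
and using `tan (π/4 + ψ/2) = (1 + sin ψ) / cos ψ` turns it into `cos ψ · |y| ≤ (1 + sin ψ) x - h`,
which says that `q` is at distance at least `h - x` from both slant lines (their unit normals are
`(sin ψ, ∓cos ψ)`). When `x ≥ h`, every frontier point has abscissa at most `h`. Either way
`(h, y)` is a nearest frontier point.
-/

open scoped RealInnerProductSpace

/-- The signed distance function of a set `F`: `−infDist(q, ∂F)` inside `F` and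
`+infDist(q, ∂F)` outside `F`. -/
noncomputable def signedDistSet (F : Set (EuclideanSpace ℝ (Fin 2)))
    (q : EuclideanSpace ℝ (Fin 2)) : ℝ :=
  open scoped Classical in
  if q ∈ F then -Metric.infDist q (frontier F) else Metric.infDist q (frontier F)

open Real Filter Topology

local notation "ℝ²" => EuclideanSpace ℝ (Fin 2)

theorem Real.tan_pi_div_four_add_half {ψ : ℝ} (h₁ : -(π / 2) < ψ) (h₂ : ψ < π / 2) :
    tan (π / 4 + ψ / 2) = (1 + sin ψ) / cos ψ := by
  have hcos : 0 < cos ψ := cos_pos_of_mem_Ioo ⟨h₁, h₂⟩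
  have hcos' : 0 < cos (π / 4 + ψ / 2) := cos_pos_of_mem_Ioo ⟨by linarith, by linarith⟩
  have hsin : sin ψ = 2 * sin (ψ / 2) * cos (ψ / 2) := by rw [← sin_two_mul]; ring_nf
  have hcos2 : cos ψ = cos (ψ / 2) ^ 2 - sin (ψ / 2) ^ 2 := by rw [← cos_two_mul']; ring_nf
  rw [tan_eq_sin_div_cos, div_eq_div_iff hcos'.ne' hcos.ne', hsin, hcos2, sin_add, cos_add,
    sin_pi_div_four, cos_pi_div_four]
  linear_combination (√2 / 2 * (cos (ψ / 2) - sin (ψ / 2))) * sin_sq_add_cos_sq (ψ / 2)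

theorem Real.abs_le_tan_mul_of_cos_mul_abs_le {ψ x y : ℝ} (hψ : 0 < cos ψ)
    (h : cos ψ * |y| ≤ sin ψ * x) : |y| ≤ tan ψ * x := by
  rw [tan_eq_sin_div_cos, div_mul_eq_mul_div, le_div_iff₀ hψ]
  linarith

theorem Real.cos_mul_abs_le_of_abs_lt_tan_pi_div_four_add_half {ψ h x y : ℝ}
    (hψ₁ : -(π / 2) < ψ) (hψ₂ : ψ < π / 2) (hy : |y| < tan (π / 4 + ψ / 2) * x - h / cos ψ) :
    cos ψ * |y| ≤ (1 + sin ψ) * x - h := by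
  have hcos : 0 < cos ψ := cos_pos_of_mem_Ioo ⟨hψ₁, hψ₂⟩
  calc cos ψ * |y| ≤ cos ψ * (tan (π / 4 + ψ / 2) * x - h / cos ψ) :=
        mul_le_mul_of_nonneg_left hy.le hcos.le
    _ = (1 + sin ψ) * x - h := by rw [tan_pi_div_four_add_half hψ₁ hψ₂]; field_simp

theorem Metric.infDist_eq_of_mem_of_forall_le {α : Type*} [PseudoMetricSpace α] {x y : α}
    {s : Set α} {r : ℝ} (hy : y ∈ s) (hxy : dist x y = r) (h : ∀ z ∈ s, r ≤ dist x z) :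
    Metric.infDist x s = r := by
  refine le_antisymm (hxy ▸ Metric.infDist_le_dist_of_mem hy) (not_lt.mp fun hlt => ?_)
  obtain ⟨z, hz, hzr⟩ := (Metric.infDist_lt_iff ⟨y, hy⟩).mp hlt
  exact (h z hz).not_gt hzr

theorem signedDistSet_eq {F : Set ℝ²} {q : ℝ²} {d : ℝ}
    (hdist : Metric.infDist q (frontier F) = |d|) (hmem : d ≤ 0 ↔ q ∈ F) :
    signedDistSet F q = d := by
  unfold signedDistSet
  split_ifs with hq
  · rw [hdist, abs_of_nonpos (hmem.mpr hq), neg_neg]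
  · rw [hdist, abs_of_pos (not_le.mp (mt hmem.mp hq))]

theorem EuclideanSpace.dist_fin_two (p q : ℝ²) :
    dist p q = √((p 0 - q 0) ^ 2 + (p 1 - q 1) ^ 2) := by
  simp [EuclideanSpace.dist_eq, Fin.sum_univ_two, Real.dist_eq, sq_abs]

theorem EuclideanSpace.abs_linear_sub_le_dist {a b : ℝ} (hab : a ^ 2 + b ^ 2 = 1) (p q : ℝ²) :
    |a * (q 0 - p 0) + b * (q 1 - p 1)| ≤ dist q p := by
  rw [EuclideanSpace.dist_fin_two]
  refine Real.abs_le_sqrt ?_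
  nlinarith [sq_nonneg (a * (q 1 - p 1) - b * (q 0 - p 0))]

theorem EuclideanSpace.abs_sub_le_dist (p q : ℝ²) (i : Fin 2) : |q i - p i| ≤ dist q p := by
  simpa only [Real.dist_eq] using PiLp.dist_apply_le q p i

def truncatedCone (ψ h : ℝ) : Set ℝ² := {q | |q 1| ≤ tan ψ * q 0 ∧ q 0 ≤ h}

section truncatedCone

variable {ψ h : ℝ}

theorem isClosed_truncatedCone : IsClosed (truncatedCone ψ h) := by
  rw [truncatedCone, Set.ofPred_and]
  exact (isClosed_le (by fun_prop) (by fun_prop)).inter (isClosed_le (by fun_prop) (by fun_prop))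

theorem frontier_truncatedCone_subset :
    frontier (truncatedCone ψ h) ⊆ {p | |p 1| = tan ψ * p 0} ∪ {p | p 0 = h} := by
  intro p hp
  rw [truncatedCone, Set.ofPred_and] at hp
  rcases frontier_inter_subset _ _ hp with ⟨hslant, -⟩ | ⟨-, hbase⟩
  · exact Or.inl (frontier_le_subset_eq (by fun_prop) (by fun_prop) hslant)
  · exact Or.inr (frontier_le_subset_eq (by fun_prop) (by fun_prop) hbase)

theorem base_mem_frontier_truncatedCone {y : ℝ} (hy : |y| ≤ tan ψ * h) :
    !₂[h, y] ∈ frontier (truncatedCone ψ h) := by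
  rw [frontier_eq_closure_inter_closure, isClosed_truncatedCone.closure_eq]
  refine ⟨⟨by simpa using hy, by simp⟩, ?_⟩
  have hlim : Tendsto (fun r : ℝ => !₂[r, y]) (𝓝[>] h) (𝓝 !₂[h, y]) :=
    ((by fun_prop : Continuous fun r : ℝ => !₂[r, y]).tendsto h).mono_left nhdsWithin_le_nhds
  refine mem_closure_of_tendsto hlim (eventually_nhdsWithin_of_forall fun r hr hrF => ?_)
  exact (Set.mem_Ioi.mp hr).not_ge (by simpa using hrF.2)

theorem base_sub_le_dist_of_mem_frontier_truncatedCone (hψ : 0 < cos ψ) {p q : ℝ²}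
    (hq : cos ψ * |q 1| ≤ (1 + sin ψ) * q 0 - h) (hp : p ∈ frontier (truncatedCone ψ h)) :
    h - q 0 ≤ dist q p := by
  rcases frontier_truncatedCone_subset hp with hslant | hbase
  · have hp1 : cos ψ * |p 1| = sin ψ * p 0 := by
      rw [hslant, tan_eq_sin_div_cos]; field_simp
    have hq1 := mul_le_mul_of_nonneg_left (le_abs_self (q 1)) hψ.le
    have hq1' := mul_le_mul_of_nonneg_left (neg_le_abs (q 1)) hψ.le
    have hunit : sin ψ ^ 2 + cos ψ ^ 2 = 1 := sin_sq_add_cos_sq ψ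
    rcases abs_cases (p 1) with ⟨habs, -⟩ | ⟨habs, -⟩
    · calc h - q 0 ≤ sin ψ * (q 0 - p 0) + -cos ψ * (q 1 - p 1) := by
            rw [habs] at hp1; linarith
        _ ≤ dist q p := (le_abs_self _).trans
            (EuclideanSpace.abs_linear_sub_le_dist (by rwa [neg_sq]) p q)
    · calc h - q 0 ≤ sin ψ * (q 0 - p 0) + cos ψ * (q 1 - p 1) := by
            rw [habs] at hp1; linarith
        _ ≤ dist q p := (le_abs_self _).trans (EuclideanSpace.abs_linear_sub_le_dist hunit p q)
  · calc h - q 0 ≤ |q 0 - p 0| := by rw [hbase, abs_sub_comm]; exact le_abs_self _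
      _ ≤ dist q p := EuclideanSpace.abs_sub_le_dist p q 0

theorem sub_base_le_dist_of_mem_frontier_truncatedCone {p q : ℝ²}
    (hp : p ∈ frontier (truncatedCone ψ h)) : q 0 - h ≤ dist q p :=
  calc q 0 - h ≤ |q 0 - p 0| :=
        (sub_le_sub_left (isClosed_truncatedCone.frontier_subset hp).2 _).trans (le_abs_self _)
    _ ≤ dist q p := EuclideanSpace.abs_sub_le_dist p q 0

theorem infDist_frontier_truncatedCone (hψ : 0 < cos ψ) {q : ℝ²} (hbase : |q 1| ≤ tan ψ * h)
    (hslant : q 0 ≤ h → cos ψ * |q 1| ≤ (1 + sin ψ) * q 0 - h) :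
    Metric.infDist q (frontier (truncatedCone ψ h)) = |q 0 - h| := by
  refine Metric.infDist_eq_of_mem_of_forall_le (base_mem_frontier_truncatedCone hbase) ?_
    fun p hp => ?_
  · simp [EuclideanSpace.dist_fin_two, sqrt_sq_eq_abs]
  rcases le_total (q 0) h with hqh | hqh
  · rw [abs_of_nonpos (sub_nonpos.mpr hqh), neg_sub]
    exact base_sub_le_dist_of_mem_frontier_truncatedCone hψ (hslant hqh) hp
  · rw [abs_of_nonneg (sub_nonneg.mpr hqh)]
    exact sub_base_le_dist_of_mem_frontier_truncatedCone hp

end truncatedCone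

theorem sdf_cone_base_region_general
    (h ψ : ℝ) (hψ : ψ ∈ Set.Ioo 0 (Real.pi / 2))
    (F : Set (EuclideanSpace ℝ (Fin 2)))
    (hF : F = {q : EuclideanSpace ℝ (Fin 2) | |q 1| ≤ Real.tan ψ * q 0 ∧ q 0 ≤ h})
    (pstar : ℝ)
    (llow : ℝ → ℝ)
    (hlow₁ : ∀ x, pstar ≤ x → x ≤ h →
      llow x = Real.tan (Real.pi / 4 + ψ / 2) * x - h / Real.cos ψ)
    (hlow₂ : ∀ x, h ≤ x → llow x = h * Real.tan ψ)
    (D₃ : Set (EuclideanSpace ℝ (Fin 2)))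
    (hD₃ : D₃ = {q : EuclideanSpace ℝ (Fin 2) |
      pstar ≤ q 0 ∧ -llow (q 0) < q 1 ∧ q 1 < llow (q 0)})
    (a₃ : EuclideanSpace ℝ (Fin 2)) (b₃ : ℝ)
    (ha₃ : a₃ = (WithLp.equiv 2 (Fin 2 → ℝ)).symm ![1, 0])
    (hb₃ : b₃ = -h) :
    ∀ q ∈ D₃,
      Metric.infDist q (frontier F) = |q 0 - h| ∧
      (q 0 - h ≤ 0 ↔ q ∈ F) ∧
      signedDistSet F q = (⟪a₃, q⟫ + b₃) / ‖a₃‖ := by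
  obtain ⟨hψ₀, hψ₂⟩ := hψ
  have hψ₁ : -(π / 2) < ψ := by linarith [pi_pos]
  have hcos : 0 < cos ψ := cos_pos_of_mem_Ioo ⟨hψ₁, hψ₂⟩
  change F = truncatedCone ψ h at hF
  subst hF hD₃ ha₃ hb₃
  rintro q ⟨hx, hy₁, hy₂⟩
  have hy : |q 1| < llow (q 0) := abs_lt.mpr ⟨by linarith, hy₂⟩
  have hslant (hxh : q 0 ≤ h) : cos ψ * |q 1| ≤ (1 + sin ψ) * q 0 - h :=
    cos_mul_abs_le_of_abs_lt_tan_pi_div_four_add_half hψ₁ hψ₂ (hlow₁ _ hx hxh ▸ hy)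
  have hbase : |q 1| ≤ tan ψ * h := by
    rcases le_total (q 0) h with hxh | hxh
    · refine abs_le_tan_mul_of_cos_mul_abs_le hcos ?_
      nlinarith [hslant hxh, sin_pos_of_pos_of_lt_pi hψ₀ (by linarith [pi_pos])]
    · rw [mul_comm, ← hlow₂ _ hxh]; exact hy.le
  have hmem : q 0 - h ≤ 0 ↔ q ∈ truncatedCone ψ h :=
    ⟨fun hxh => ⟨abs_le_tan_mul_of_cos_mul_abs_le hcos (by linarith [hslant (by linarith)]),
      by linarith⟩, fun hq => sub_nonpos.mpr hq.2⟩
  have hdist := infDist_frontier_truncatedCone hcos hbase hslant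
  refine ⟨hdist, hmem, ?_⟩
  rw [signedDistSet_eq hdist hmem]
  simp [EuclideanSpace.norm_eq, PiLp.inner_apply, Fin.sum_univ_two, sub_eq_add_neg]

/-- Signed distance of the 2-D cone, base region `D₃`: for
`q = (x, y) ∈ D₃ = {(x,y) : x ≥ p*, −l̲₁(x) < y < l̲₁(x)}`, the distance from `q` to the
frontier of `F` is `|x − h|`; moreover `x − h ≤ 0` iff `q ∈ F`, so the signed distance
of `q` to `F` equals `(a₃·q + b₃)/‖a₃‖` with `a₃ = (1, 0)`, `b₃ = −h`. -/
theorem sdf_cone_base_region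
    (h ψ : ℝ) (hh : 0 < h) (hψ : ψ ∈ Set.Ioo 0 (Real.pi / 2))
    (F : Set (EuclideanSpace ℝ (Fin 2)))
    (hF : F = {q : EuclideanSpace ℝ (Fin 2) | |q 1| ≤ Real.tan ψ * q 0 ∧ q 0 ≤ h})
    (pstar : ℝ) (hpstar : pstar = h / (1 + Real.sin ψ))
    (llow : ℝ → ℝ)
    (hlow₁ : ∀ x, pstar ≤ x → x ≤ h →
      llow x = Real.tan (Real.pi / 4 + ψ / 2) * x - h / Real.cos ψ)
    (hlow₂ : ∀ x, h ≤ x → llow x = h * Real.tan ψ)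
    (D₃ : Set (EuclideanSpace ℝ (Fin 2)))
    (hD₃ : D₃ = {q : EuclideanSpace ℝ (Fin 2) |
      pstar ≤ q 0 ∧ -llow (q 0) < q 1 ∧ q 1 < llow (q 0)})
    (a₃ : EuclideanSpace ℝ (Fin 2)) (b₃ : ℝ)
    (ha₃ : a₃ = (WithLp.equiv 2 (Fin 2 → ℝ)).symm ![1, 0])
    (hb₃ : b₃ = -h) :
    ∀ q ∈ D₃,
      Metric.infDist q (frontier F) = |q 0 - h| ∧
      (q 0 - h ≤ 0 ↔ q ∈ F) ∧
      signedDistSet F q = (⟪a₃, q⟫ + b₃) / ‖a₃‖ :=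
  sdf_cone_base_region_general h ψ hψ F hF pstar llow hlow₁ hlow₂ D₃ hD₃ a₃ b₃ ha₃ hb₃
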